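/- For every n ≥ 2, the minimal counterexample size for generalized edge reconstruction satisfies k_n ≤ 2^{⌊n/3⌋}. -/

import Mathlib

open SimpleGraph

/-- A finite simple graph, packaged with its (finite) vertex type. -/
structure FGraph : Type 1 where
  V : Type
  [finV : Finite V]
  graph : SimpleGraph V

attribute [instance] FGraph.finV

namespace FGraph

/-- Two finite graphs are isomorphic if there is a graph isomorphism between them. -/
def IsIsoTo (G H : FGraph) : Prop := Nonempty (G.graph ≃g H.graph)

instance setoid : Setoid FGraph where
  r := IsIsoTo
  iseqv := ⟨fun G => ⟨RelIso.refl G.graph.Adj⟩, fun ⟨e⟩ => ⟨e.symm⟩, fun ⟨e⟩ ⟨f⟩ => ⟨e.trans f⟩⟩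

end FGraph

/-- Isomorphism classes of finite simple graphs. -/
def GraphClass : Type 1 := Quotient FGraph.setoid

namespace FGraph

/-- The isomorphism class of a finite graph. -/
def cls (G : FGraph) : GraphClass := Quotient.mk _ G

/-- The number of edges of a finite graph. -/
noncomputable def edgeCount (G : FGraph) : ℕ := G.graph.edgeSet.ncard

/-- The edge-deleted subgraph `G - e`: same vertices, with the edge `e` removed. -/
def deleteEdge (G : FGraph) (e : Sym2 G.V) : FGraph :=
  { V := G.V, graph := G.graph.deleteEdges {e} }

/-- The multiset of edge-deleted subgraphs of `G` (one for each edge), as graphs. -/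
noncomputable def deckGraphs (G : FGraph) : Multiset FGraph :=
  (G.graph.edgeSet.toFinite.toFinset.val).map fun e => G.deleteEdge e

/-- The edge deck of `G` : the multiset of isomorphism classes of the edge-deleted
subgraphs `G - e`, one for each edge `e` of `G`. -/
noncomputable def edgeDeck (G : FGraph) : Multiset GraphClass :=
  G.deckGraphs.map cls

lemma exists_of_mem_edgeDeck {G : FGraph} {c : GraphClass} (hc : c ∈ G.edgeDeck) :
    ∃ H : FGraph, H.cls = c ∧ H.edgeCount = G.edgeCount - 1 := by
  classical
  rw [edgeDeck, deckGraphs, Multiset.map_map] at hc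
  obtain ⟨e, he, rfl⟩ := Multiset.mem_map.mp hc
  refine ⟨G.deleteEdge e, rfl, ?_⟩
  have he' : e ∈ G.graph.edgeSet := by
    simpa using (Set.Finite.mem_toFinset _).mp he
  simp only [edgeCount, deleteEdge, SimpleGraph.edgeSet_deleteEdges]
  exact Set.ncard_sdiff_singleton_of_mem he'

/-- The disjoint union of two finite graphs. -/
def disjUnion (G H : FGraph) : FGraph :=
  { V := G.V ⊕ H.V, graph := G.graph ⊕g H.graph }

end FGraph

/-- `𝒢 n` is the set of isomorphism classes of graphs with exactly `n` edges. -/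
def GClass (n : ℕ) : Type 1 :=
  {c : GraphClass // ∃ G : FGraph, G.cls = c ∧ G.edgeCount = n}

/-- Given a graph `G` with `n` edges, sum a function `f` over the edge deck of `G`,
regarded as a multiset of isomorphism classes of graphs with `n - 1` edges. -/
noncomputable def FGraph.edgeDeckSum (n : ℕ) (G : FGraph) (hG : G.edgeCount = n)
    {β : Type*} [AddCommMonoid β] (f : GClass (n - 1) → β) : β :=
  (G.edgeDeck.attach.map fun c => f ⟨c.1, by
    obtain ⟨H, h1, h2⟩ := FGraph.exists_of_mem_edgeDeck c.2
    exact ⟨H, h1, by rw [h2, hG]⟩⟩).sum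

/-- The subgroup of relations defining `K₀(Γ_{n,n-1})`: for every graph `G` with `n`
edges, `[G] = Σ_{C ∈ ED(G)} [C]`. -/
def K0Rel (n : ℕ) : AddSubgroup (FreeAbelianGroup (GClass n ⊕ GClass (n - 1))) :=
  AddSubgroup.closure
    {x | ∃ (G : FGraph) (hG : G.edgeCount = n),
      x = FreeAbelianGroup.of (Sum.inl ⟨G.cls, G, rfl, hG⟩)
        - G.edgeDeckSum n hG (fun c => FreeAbelianGroup.of (Sum.inr c))}

/-- `K₀(Γ_{n,n-1})`: the free abelian group on `𝒢 n ⊔ 𝒢 (n-1)` modulo the edge-deck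
relations. -/
abbrev K0Gamma (n : ℕ) : Type 1 :=
  FreeAbelianGroup (GClass n ⊕ GClass (n - 1)) ⧸ K0Rel n

/-- The map `ι_n : 𝒢 n → K₀(Γ_{n,n-1})` sending a class to its image in the quotient. -/
noncomputable def iotaCls (n : ℕ) (c : GClass n) : K0Gamma n :=
  QuotientAddGroup.mk (FreeAbelianGroup.of (Sum.inl c))

/-- Generalized edge reconstruction fails for `n`-edge graphs with `k` pieces: there are
two distinct multisets of `k` isomorphism classes of graphs with exactly `n` edges whose
total edge decks agree. -/
def GERFails (n k : ℕ) : Prop :=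
  ∃ M M' : Multiset FGraph,
    Multiset.card M = k ∧ Multiset.card M' = k ∧
    (∀ G ∈ M, G.edgeCount = n) ∧ (∀ G ∈ M', G.edgeCount = n) ∧
    M.map FGraph.cls ≠ M'.map FGraph.cls ∧
    (M.map FGraph.edgeDeck).sum = (M'.map FGraph.edgeDeck).sum

/-- `kmin n` is the least `k ≥ 1` for which generalized edge reconstruction fails for
`n`-edge graphs. -/
noncomputable def kmin (n : ℕ) : ℕ := sInf {k | 1 ≤ k ∧ GERFails n k}

/-- The graph `2K₂`: four vertices, two disjoint edges. -/
def twoK2 : FGraph :=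
  { V := Fin 4, graph := SimpleGraph.fromEdgeSet {s(0, 1), s(2, 3)} }

/-- The graph `P₃ ⊔ K₁`: a two-edge path together with an isolated vertex. -/
def p3K1 : FGraph :=
  { V := Fin 4, graph := SimpleGraph.fromEdgeSet {s(0, 1), s(1, 2)} }

/-- The graph `K₃ ⊔ K₁`: a triangle together with an isolated vertex. -/
def k3K1 : FGraph :=
  { V := Fin 4, graph := SimpleGraph.fromEdgeSet {s(0, 1), s(1, 2), s(0, 2)} }

/-- The star `K_{1,3}`: a center vertex adjacent to three leaves. -/
def k13 : FGraph :=
  { V := Fin 4, graph := SimpleGraph.fromEdgeSet {s(0, 1), s(0, 2), s(0, 3)} }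

/-! The edge deck is a derivation for disjoint union: `ED(G ⊔ H) = ED(G) ⊔ H + G ⊔ ED(H)`.
Hence if `P, Q` have equal edge decks and the multisets `M, M'` have equal total edge decks, then
so do `P ⊔ M + Q ⊔ M'` and `P ⊔ M' + Q ⊔ M`, the positive and negative parts of the product
`(P - Q)(M - M')`. The pairs `P₃ ⊔ K₁, 2K₂` (two edges) and `K₁,₃, K₃ ⊔ K₁` (three edges) have
equal edge decks, and a product of `r` such factors gives a failure with `2 ^ (r - 1)` pieces;
writing `n = 2 + 3 + ⋯ + 3`, `3 + ⋯ + 3` or `2 + 2 + 3 + ⋯ + 3` gives `r - 1 ≤ ⌊n/3⌋`.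
The two sides stay non-isomorphic because `Σ_v deg(v)³` is additive under disjoint union and
larger on the first graph of each pair, so the union of all first graphs attains a value that no
member of the other side reaches. -/

namespace SimpleGraph

variable {V W : Type*} (G : SimpleGraph V) (H : SimpleGraph W)

lemma edgeSet_sum :
    (G ⊕g H).edgeSet = Sym2.map Sum.inl '' G.edgeSet ∪ Sym2.map Sum.inr '' H.edgeSet := by
  ext e
  induction e using Sym2.ind with
  | _ u v => cases u <;> cases v <;> simp [Sym2.exists, and_or_left, exists_or, adj_comm]

lemma deleteEdges_sum_map_inl (e : Sym2 V) :
    (G ⊕g H).deleteEdges {e.map Sum.inl} = G.deleteEdges {e} ⊕g H := by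
  induction e using Sym2.ind with
  | _ x y => ext (u | u) (v | v) <;> simp

lemma deleteEdges_sum_map_inr (e : Sym2 W) :
    (G ⊕g H).deleteEdges {e.map Sum.inr} = G ⊕g H.deleteEdges {e} := by
  induction e using Sym2.ind with
  | _ x y => ext (u | u) (v | v) <;> simp

end SimpleGraph

lemma Sym2.map_inl_ne_map_inr {α β : Type*} (x : Sym2 α) (y : Sym2 β) :
    x.map (Sum.inl : α → α ⊕ β) ≠ y.map Sum.inr := by
  induction x using Sym2.ind
  induction y using Sym2.ind
  simp

namespace FGraph

lemma disjUnion_congr {G G' H H' : FGraph} (hG : G ≈ G') (hH : H ≈ H') :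
    G.disjUnion H ≈ G'.disjUnion H' :=
  let ⟨e⟩ := hG
  let ⟨f⟩ := hH
  ⟨e.sumCongr f⟩

end FGraph

def GraphClass.disjUnion (c d : GraphClass) : GraphClass :=
  Quotient.map₂ FGraph.disjUnion (fun _ _ hG _ _ hH => FGraph.disjUnion_congr hG hH) c d

namespace FGraph

lemma edgeCount_disjUnion (G H : FGraph) :
    (G.disjUnion H).edgeCount = G.edgeCount + H.edgeCount := by
  simp only [edgeCount, ← Nat.card_coe_set_eq]
  exact (Nat.card_congr edgeSetSumEquiv).trans Nat.card_sum

lemma card_edgeDeck (G : FGraph) : Multiset.card G.edgeDeck = G.edgeCount := by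
  simp [edgeDeck, deckGraphs, edgeCount, Set.ncard_eq_toFinset_card _ G.graph.edgeSet.toFinite]

lemma edgeDeck_disjUnion (G H : FGraph) :
    (G.disjUnion H).edgeDeck =
      G.edgeDeck.map (·.disjUnion H.cls) + H.edgeDeck.map (G.cls.disjUnion ·) := by
  classical
  let ιG : Sym2 G.V ↪ Sym2 (G.disjUnion H).V := Function.Embedding.inl.sym2Map
  let ιH : Sym2 H.V ↪ Sym2 (G.disjUnion H).V := Function.Embedding.inr.sym2Map
  have hdisj : Disjoint (G.graph.edgeSet.toFinite.toFinset.map ιG)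
      (H.graph.edgeSet.toFinite.toFinset.map ιH) := by
    simp only [Finset.disjoint_left, Finset.mem_map]
    rintro _ ⟨x, -, rfl⟩ ⟨y, -, h⟩
    exact Sym2.map_inl_ne_map_inr x y h.symm
  have hedges : (G.disjUnion H).graph.edgeSet.toFinite.toFinset =
      (G.graph.edgeSet.toFinite.toFinset.map ιG).disjUnion
        (H.graph.edgeSet.toFinite.toFinset.map ιH) hdisj := by
    apply Finset.coe_injective
    rw [Finset.disjUnion_eq_union, Finset.coe_union, Finset.coe_map, Finset.coe_map,
      Set.Finite.coe_toFinset, Set.Finite.coe_toFinset, Set.Finite.coe_toFinset]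
    exact edgeSet_sum G.graph H.graph
  simp only [edgeDeck, deckGraphs, hedges, Finset.disjUnion, Finset.map_val, Multiset.map_add,
    Multiset.map_map, Function.comp_def]
  congr 1 <;> refine Multiset.map_congr rfl fun e _ => ?_
  · exact congrArg (fun g => cls ⟨G.V ⊕ H.V, g⟩) (deleteEdges_sum_map_inl G.graph H.graph e)
  · exact congrArg (fun g => cls ⟨G.V ⊕ H.V, g⟩) (deleteEdges_sum_map_inr G.graph H.graph e)

noncomputable def deckSum (M : Multiset FGraph) : Multiset GraphClass :=
  (M.map edgeDeck).sum

lemma deckSum_add (M N : Multiset FGraph) : deckSum (M + N) = deckSum M + deckSum N := by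
  simp [deckSum]

lemma deckSum_map_disjUnion (P : FGraph) (M : Multiset FGraph) :
    deckSum (M.map P.disjUnion) =
      (M.map fun G => P.edgeDeck.map (·.disjUnion G.cls)).sum +
        (deckSum M).map (P.cls.disjUnion ·) := by
  have hmap := map_multiset_sum (Multiset.mapAddMonoidHom (P.cls.disjUnion ·)) (M.map edgeDeck)
  simp only [Multiset.coe_mapAddMonoidHom, Multiset.map_map, Function.comp_def] at hmap
  simp only [deckSum, Multiset.map_map, Function.comp_def, edgeDeck_disjUnion,
    Multiset.sum_map_add, hmap]

lemma deckSum_exchange {P Q : FGraph} (hPQ : P.edgeDeck = Q.edgeDeck) {M M' : Multiset FGraph}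
    (hM : deckSum M = deckSum M') :
    deckSum (M.map P.disjUnion + M'.map Q.disjUnion) =
      deckSum (M'.map P.disjUnion + M.map Q.disjUnion) := by
  simp only [deckSum_add, deckSum_map_disjUnion, hPQ, hM]
  abel

/-- `Nat.card G.StarTuple = Σ_v deg(v)³`. -/
abbrev StarTuple (G : FGraph) : Type :=
  {p : G.V × G.V × G.V × G.V //
    G.graph.Adj p.1 p.2.1 ∧ G.graph.Adj p.1 p.2.2.1 ∧ G.graph.Adj p.1 p.2.2.2}

noncomputable def starCount (G : FGraph) : ℕ := Nat.card G.StarTuple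

lemma starCount_congr {G H : FGraph} (h : G ≈ H) : G.starCount = H.starCount := by
  obtain ⟨e⟩ := h
  exact Nat.card_congr <| Equiv.subtypeEquiv
    (e.toEquiv.prodCongr (e.toEquiv.prodCongr (e.toEquiv.prodCongr e.toEquiv)))
    (fun p => by simp [e.map_adj_iff])

def starTupleSum (G H : FGraph) : G.StarTuple ⊕ H.StarTuple → (G.disjUnion H).StarTuple
  | .inl ⟨(a, b, c, d), h⟩ => ⟨(.inl a, .inl b, .inl c, .inl d), h⟩
  | .inr ⟨(a, b, c, d), h⟩ => ⟨(.inr a, .inr b, .inr c, .inr d), h⟩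

lemma starTupleSum_bijective (G H : FGraph) : Function.Bijective (starTupleSum G H) := by
  constructor
  · rintro (⟨⟨a, b, c, d⟩, h⟩ | ⟨⟨a, b, c, d⟩, h⟩)
      (⟨⟨a', b', c', d'⟩, h'⟩ | ⟨⟨a', b', c', d'⟩, h'⟩) e <;>
      simp only [starTupleSum] at e <;>
      obtain ⟨⟨⟩, ⟨⟩, ⟨⟩, ⟨⟩⟩ := e <;> rfl
  · rintro ⟨⟨a | a, b | b, c | c, d | d⟩, h⟩ <;> simp [disjUnion] at h
    · exact ⟨.inl ⟨(a, b, c, d), h⟩, rfl⟩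
    · exact ⟨.inr ⟨(a, b, c, d), h⟩, rfl⟩

lemma starCount_disjUnion (G H : FGraph) :
    (G.disjUnion H).starCount = G.starCount + H.starCount :=
  (Nat.card_congr (Equiv.ofBijective _ (starTupleSum_bijective G H))).symm.trans Nat.card_sum

end FGraph

open FGraph

def SeparatedFailure (n k : ℕ) : Prop :=
  ∃ M M' : Multiset FGraph,
    Multiset.card M = k ∧ Multiset.card M' = k ∧
    (∀ G ∈ M + M', G.edgeCount = n) ∧ deckSum M = deckSum M' ∧
    ∃ G₀ ∈ M, (∀ G ∈ M, G.starCount ≤ G₀.starCount) ∧ ∀ G ∈ M', G.starCount < G₀.starCount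

lemma separatedFailure_of_edgeDeck_eq {P Q : FGraph} (hPQ : P.edgeDeck = Q.edgeDeck)
    (hstar : Q.starCount < P.starCount) : SeparatedFailure P.edgeCount 1 := by
  have hQ : Q.edgeCount = P.edgeCount := by rw [← card_edgeDeck, ← card_edgeDeck, hPQ]
  refine ⟨{P}, {Q}, rfl, rfl, by simp [hQ], by simp [deckSum, hPQ], P, by simp, by simp,
    by simpa using hstar⟩

namespace SeparatedFailure

variable {n k : ℕ}

lemma gerFails (h : SeparatedFailure n k) : GERFails n k := by
  obtain ⟨M, M', hM, hM', hn, hdeck, G₀, hG₀, -, hlt⟩ := h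
  refine ⟨M, M', hM, hM', fun G hG => hn G (Multiset.mem_add.2 (.inl hG)),
    fun G hG => hn G (Multiset.mem_add.2 (.inr hG)), fun hcls => ?_, hdeck⟩
  obtain ⟨G, hG, hGG₀⟩ := Multiset.mem_map.1 (hcls ▸ Multiset.mem_map_of_mem cls hG₀)
  exact (hlt G hG).ne (starCount_congr (Quotient.exact hGG₀))

lemma one_le (h : SeparatedFailure n k) : 1 ≤ k := by
  obtain ⟨M, -, rfl, -, -, -, G₀, hG₀, -⟩ := h
  exact Multiset.card_pos_iff_exists_mem.2 ⟨G₀, hG₀⟩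

lemma disjUnion (h : SeparatedFailure n k) {P Q : FGraph} (hPQ : P.edgeDeck = Q.edgeDeck)
    (hstar : Q.starCount < P.starCount) : SeparatedFailure (P.edgeCount + n) (2 * k) := by
  obtain ⟨M, M', hM, hM', hn, hdeck, G₀, hG₀, hle, hlt⟩ := h
  have hQ : Q.edgeCount = P.edgeCount := by rw [← card_edgeDeck, ← card_edgeDeck, hPQ]
  refine ⟨M.map P.disjUnion + M'.map Q.disjUnion, M'.map P.disjUnion + M.map Q.disjUnion,
    by simp [hM, hM', two_mul], by simp [hM, hM', two_mul], ?_, deckSum_exchange hPQ hdeck,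
    P.disjUnion G₀, Multiset.mem_add.2 (.inl (Multiset.mem_map_of_mem _ hG₀)), ?_, ?_⟩
  · simp only [Multiset.mem_add, Multiset.mem_map]
    rintro _ ((⟨G, hG, rfl⟩ | ⟨G, hG, rfl⟩) | (⟨G, hG, rfl⟩ | ⟨G, hG, rfl⟩)) <;>
      simp [edgeCount_disjUnion, hQ, hn G (by simp [hG])]
  · simp only [Multiset.mem_add, Multiset.mem_map]
    rintro _ (⟨G, hG, rfl⟩ | ⟨G, hG, rfl⟩) <;> simp only [starCount_disjUnion]
    · exact Nat.add_le_add_left (hle G hG) _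
    · exact Nat.add_le_add hstar.le (hlt G hG).le
  · simp only [Multiset.mem_add, Multiset.mem_map]
    rintro _ (⟨G, hG, rfl⟩ | ⟨G, hG, rfl⟩) <;> simp only [starCount_disjUnion]
    · exact Nat.add_lt_add_left (hlt G hG) _
    · exact Nat.add_lt_add_of_lt_of_le hstar (hle G hG)

lemma kmin_le (h : SeparatedFailure n k) : kmin n ≤ k :=
  Nat.sInf_le ⟨h.one_le, h.gerFails⟩

end SeparatedFailure

namespace FGraph

lemma edgeDeck_eq_replicate {G H : FGraph} (h : ∀ e ∈ G.graph.edgeSet, G.deleteEdge e ≈ H) :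
    G.edgeDeck = Multiset.replicate G.edgeCount H.cls := by
  refine Multiset.eq_replicate.2 ⟨card_edgeDeck G, fun c hc => ?_⟩
  simp only [edgeDeck, deckGraphs, Multiset.map_map, Multiset.mem_map, Finset.mem_val,
    Set.Finite.mem_toFinset, Function.comp_apply] at hc
  obtain ⟨e, he, rfl⟩ := hc
  exact Quotient.sound (h e he)

/-- For concrete `S` and `T` the hypothesis is decidable, so `decide` finds the permutations. -/
lemma deleteEdge_equiv_of_perm {n : ℕ} {S T : Set (Sym2 (Fin n))}
    (h : ∀ e ∈ S, ∃ σ : Equiv.Perm (Fin n),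
      ∀ a b, (fromEdgeSet T).Adj (σ a) (σ b) ↔ (fromEdgeSet (S \ {e})).Adj a b) :
    ∀ e ∈ (fromEdgeSet S).edgeSet,
      deleteEdge ⟨Fin n, fromEdgeSet S⟩ e ≈ ⟨Fin n, fromEdgeSet T⟩ := fun e he =>
  have ⟨σ, hσ⟩ := h e (edgeSet_fromEdgeSet S ▸ he).1
  ⟨⟨σ, fun {a b} => (hσ a b).trans (by simp only [deleteEdge, deleteEdges_fromEdgeSet])⟩⟩

open Finset in
lemma edgeCount_eq_card_filter (G : FGraph) [Fintype G.V] [DecidableEq G.V]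
    [DecidableRel G.graph.Adj] : G.edgeCount = #{e | e ∈ G.graph.edgeSet} := by
  rw [edgeCount, ← Set.ncard_coe_finset]
  congr
  ext
  simp

def k2TwoK1 : FGraph := { V := Fin 4, graph := fromEdgeSet {s(0, 1)} }

lemma edgeCount_p3K1 : p3K1.edgeCount = 2 := by
  unfold p3K1; rw [edgeCount_eq_card_filter]; decide

lemma edgeCount_twoK2 : twoK2.edgeCount = 2 := by
  unfold twoK2; rw [edgeCount_eq_card_filter]; decide

lemma edgeCount_k13 : k13.edgeCount = 3 := by
  unfold k13; rw [edgeCount_eq_card_filter]; decide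

lemma edgeCount_k3K1 : k3K1.edgeCount = 3 := by
  unfold k3K1; rw [edgeCount_eq_card_filter]; decide

lemma edgeDeck_p3K1_eq_twoK2 : p3K1.edgeDeck = twoK2.edgeDeck := by
  rw [edgeDeck_eq_replicate (H := k2TwoK1) (by apply deleteEdge_equiv_of_perm; decide),
    edgeDeck_eq_replicate (H := k2TwoK1) (by apply deleteEdge_equiv_of_perm; decide),
    edgeCount_p3K1, edgeCount_twoK2]

lemma edgeDeck_k13_eq_k3K1 : k13.edgeDeck = k3K1.edgeDeck := by
  rw [edgeDeck_eq_replicate (H := p3K1) (by apply deleteEdge_equiv_of_perm; decide),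
    edgeDeck_eq_replicate (H := p3K1) (by apply deleteEdge_equiv_of_perm; decide),
    edgeCount_k13, edgeCount_k3K1]

lemma starCount_twoK2_lt_p3K1 : twoK2.starCount < p3K1.starCount := by
  unfold twoK2 p3K1 starCount
  simp only [Nat.card_eq_fintype_card]
  decide

lemma starCount_k3K1_lt_k13 : k3K1.starCount < k13.starCount := by
  unfold k3K1 k13 starCount
  simp only [Nat.card_eq_fintype_card]
  decide

end FGraph

lemma exists_separatedFailure {n : ℕ} (hn : 2 ≤ n) :
    ∃ k ≤ 2 ^ (n / 3), SeparatedFailure n k := by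
  have fail₂ : SeparatedFailure 2 1 := edgeCount_p3K1 ▸
    separatedFailure_of_edgeDeck_eq edgeDeck_p3K1_eq_twoK2 starCount_twoK2_lt_p3K1
  have fail₃ : SeparatedFailure 3 1 := edgeCount_k13 ▸
    separatedFailure_of_edgeDeck_eq edgeDeck_k13_eq_k3K1 starCount_k3K1_lt_k13
  induction n using Nat.strong_induction_on with
  | _ n ih =>
    rcases (by omega : n = 2 ∨ n = 3 ∨ n = 4 ∨ 5 ≤ n) with rfl | rfl | rfl | hn5
    · exact ⟨1, by norm_num, fail₂⟩
    · exact ⟨1, by norm_num, fail₃⟩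
    · refine ⟨2, by norm_num, ?_⟩
      simpa [edgeCount_p3K1] using
        fail₂.disjUnion edgeDeck_p3K1_eq_twoK2 starCount_twoK2_lt_p3K1
    · obtain ⟨k, hk, h⟩ := ih (n - 3) (by omega) (by omega)
      refine ⟨2 * k, ?_, ?_⟩
      · calc 2 * k ≤ 2 * 2 ^ ((n - 3) / 3) := by omega
          _ = 2 ^ (n / 3) := by rw [← pow_succ']; congr 1; omega
      · have := h.disjUnion edgeDeck_k13_eq_k3K1 starCount_k3K1_lt_k13
        rwa [edgeCount_k13, show 3 + (n - 3) = n by omega] at this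

/-- for `n ≥ 2` the minimal counterexample size for generalized edge
reconstruction satisfies `k_n ≤ 2 ^ ⌊n/3⌋`. -/
theorem kmin_le_two_pow (n : ℕ) (hn : 2 ≤ n) : kmin n ≤ 2 ^ (n / 3) := by
  obtain ⟨k, hk, h⟩ := exists_separatedFailure hn
  exact h.kmin_le.trans hk
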